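/- Let R be a commutative ring, P₀ a finitely generated projective R-module of rank 2, n ≥ 4, and P_n = P₀ ⊕ Re₃ ⊕ ⋯ ⊕ Re_n. Let a = (a₀, a₃, a₄, …, a_n) ∈ Um(P_n) and k ∈ ℕ. Consider the R[T]-linear map f(T) = (a₀ ⊗ 1, a₃^k, a₄ + T·a₃, a₅, …, a_n) : P_n ⊗_R R[T] → R[T], obtained by base change of the coordinates of a and replacing the e₃-coordinate by a₃^k and the e₄-coordinate by a₄ + T·a₃. Then f(T) is surjective, and there exists an R[T]-linear automorphism φ of P_n ⊗_R R[T] such that f(T) = f(0) ∘ φ, where f(0) is the base change to R[T] of (a₀, a₃^k, a₄, a₅, …, a_n) : P_n → R. -/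

import Mathlib

open Function

section Defs

variable (R : Type*) [CommRing R] (M : Type*) [AddCommGroup M] [Module R M] (m : ℕ)

/-- `Pn R M m` models `P_n = P₀ ⊕ Re₃ ⊕ ⋯ ⊕ Re_n` with `m = n - 2` free summands. -/
abbrev Pn := M × (Fin m → R)

/-- Projection onto `P₀`. -/
def proj0 : Pn R M m →ₗ[R] M := LinearMap.fst R M (Fin m → R)

/-- Projection `π_{k,n}` onto the `i`-th free summand. -/
def projF (i : Fin m) : Pn R M m →ₗ[R] R :=
  (LinearMap.proj i).comp (LinearMap.snd R M (Fin m → R))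

/-- Inclusion of `P₀`. -/
def incl0 : M →ₗ[R] Pn R M m := LinearMap.inl R M (Fin m → R)

/-- Inclusion of the `i`-th free summand. -/
def inclF (i : Fin m) : R →ₗ[R] Pn R M m :=
  (LinearMap.inr R M (Fin m → R)).comp (LinearMap.single R (fun _ => R) i)

/-- An endomorphism is elementary if it is `id + s` where `s` maps one direct
summand of `P₀ ⊕ Re₃ ⊕ ⋯ ⊕ Re_n` into a different one. -/
def IsElementary (φ : Module.End R (Pn R M m)) : Prop :=
  (∃ i : Fin m, ∃ t : M →ₗ[R] R, φ = LinearMap.id + (inclF R M m i) ∘ₗ t ∘ₗ (proj0 R M m)) ∨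
  (∃ i : Fin m, ∃ t : R →ₗ[R] M, φ = LinearMap.id + (incl0 R M m) ∘ₗ t ∘ₗ (projF R M m i)) ∨
  (∃ i j : Fin m, i ≠ j ∧ ∃ t : R →ₗ[R] R,
    φ = LinearMap.id + (inclF R M m i) ∘ₗ t ∘ₗ (projF R M m j))

/-- `E(P_n)`: the subgroup of `Aut(P_n)` generated by elementary automorphisms. -/
def Elem : Subgroup (Module.End R (Pn R M m))ˣ :=
  Subgroup.closure { φ : (Module.End R (Pn R M m))ˣ | IsElementary R M m ↑φ }

/-- The `i`-th free coordinate `a_i = a(e_i)` of a linear map `a : P_n → R`. -/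
def coord (a : Pn R M m →ₗ[R] R) (i : Fin m) : R := a (inclF R M m i 1)

/-- The map obtained from `a` by replacing its `i`-th free coordinate by `c`. -/
def replace (a : Pn R M m →ₗ[R] R) (i : Fin m) (c : R) : Pn R M m →ₗ[R] R :=
  a + (c - coord R M m a i) • projF R M m i

/-- A module has rank two if its localization at every prime has rank two. -/
def RankTwo : Prop :=
  ∀ (p : Ideal R) (_ : p.IsPrime),
    Module.finrank (Localization.AtPrime p) (LocalizedModule p.primeCompl M) = 2

/-- Given `b = (b₀, b₃) : P₃ → R` and `a : P_n → R`, the map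
`(b₀, b₃, a₄, …, a_n) : P_n → R`. -/
def combine (h : 0 < m) (b : M × R →ₗ[R] R) (a : Pn R M m →ₗ[R] R) :
    Pn R M m →ₗ[R] R :=
  b ∘ₗ (LinearMap.prod (proj0 R M m) (projF R M m ⟨0, h⟩)) +
    ∑ i ∈ Finset.univ.erase (⟨0, h⟩ : Fin m), coord R M m a i • projF R M m i

end Defs

open TensorProduct

section BaseChange

variable (R : Type*) [CommRing R] (M : Type*) [AddCommGroup M] [Module R M] (m : ℕ)

/-- The base change to `R[T]` of an `R`-linear map `P_n → R`, viewed as an `R[T]`-linear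
map `P_n ⊗[R] R[T] → R[T]`. -/
noncomputable def bcMap (g : Pn R M m →ₗ[R] R) :
    Polynomial R ⊗[R] Pn R M m →ₗ[Polynomial R] Polynomial R :=
  (Algebra.TensorProduct.rid R (Polynomial R) (Polynomial R)).toLinearEquiv.toLinearMap ∘ₗ
    g.baseChange (Polynomial R)

/-- `f(T) = (a₀ ⊗ 1, a₃^k, a₄ + T·a₃, a₅, …, a_n) : P_n ⊗[R] R[T] → R[T]`: the base
change of `(a₀, a₃^k, a₄, …, a_n)` plus `T` times the base change of the map
`(p, v) ↦ a₃ · v₄`. -/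
noncomputable def fT (h0 : 0 < m) (h1 : 1 < m) (a : Pn R M m →ₗ[R] R) (k : ℕ) :
    Polynomial R ⊗[R] Pn R M m →ₗ[Polynomial R] Polynomial R :=
  bcMap R M m (replace R M m a ⟨0, h0⟩ ((coord R M m a ⟨0, h0⟩) ^ k)) +
    (Polynomial.X : Polynomial R) • bcMap R M m ((coord R M m a ⟨0, h0⟩) • projF R M m ⟨1, h1⟩)

end BaseChange

/-!
Write `b = (a₀, a₃^k, a₄, …, a_n)` and `θ = T·a₃`, so that `f(T) = b + θ·π₄` with `π₄` the
`e₄`-coordinate. Since `a₃` is coprime to the ideal generated by the other coordinates of `a`,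
so is `a₃^k`, hence `b` is unimodular; pick `x` with `b x = 1`. Moreover `θ` is nilpotent
modulo `b(e₃) = a₃^k`, so `1 + θ·π₄(x)` is a unit modulo `a₃^k·θ·π₄(x)`. This is exactly what
is needed to correct the map `y ↦ y + θ π₄(y) x` (which already satisfies `b ∘ φ = f(T)` but
has determinant `1 + θ π₄(x)`) by a term `ρ ⊗ (e₃ - a₃^k x)` with values in `ker b`, so that
the resulting rank-two perturbation of the identity has determinant `1`.
-/

open Module

namespace LinearMap

variable {S N : Type*} [CommRing S] [AddCommGroup N] [Module S N]

/-- `x ↦ x + f₁ x • v₁ + f₂ x • v₂`; its inverse, when it exists, is again of this form, built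
from the adjugate of the matrix `(δᵢⱼ + fᵢ vⱼ)`. -/
def transvectionPair (f₁ f₂ : Dual S N) (v₁ v₂ : N) : N →ₗ[S] N :=
  id + f₁.smulRight v₁ + f₂.smulRight v₂

theorem transvectionPair_apply (f₁ f₂ : Dual S N) (v₁ v₂ x : N) :
    transvectionPair f₁ f₂ v₁ v₂ x = x + f₁ x • v₁ + f₂ x • v₂ :=
  rfl

theorem comp_transvectionPair (b f₁ f₂ : Dual S N) (v₁ v₂ : N) :
    b ∘ₗ transvectionPair f₁ f₂ v₁ v₂ = b + b v₁ • f₁ + b v₂ • f₂ := by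
  ext x
  simp [transvectionPair_apply, mul_comm]

variable {f₁ f₂ : Dual S N} {v₁ v₂ : N}

theorem transvectionPair_comp_adjugate (h : (1 + f₁ v₁) * (1 + f₂ v₂) - f₁ v₂ * f₂ v₁ = 1) :
    transvectionPair f₁ f₂ v₁ v₂ ∘ₗ
      transvectionPair f₁ f₂ (f₂ v₁ • v₂ - (1 + f₂ v₂) • v₁)
        (f₁ v₂ • v₁ - (1 + f₁ v₁) • v₂) = id := by
  ext x
  simp only [comp_apply, transvectionPair_apply, id_apply, map_add, map_sub, map_smul]
  match_scalars
  · ring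
  · linear_combination (-(f₁ x)) * h
  · linear_combination (-(f₂ x)) * h

theorem adjugate_comp_transvectionPair (h : (1 + f₁ v₁) * (1 + f₂ v₂) - f₁ v₂ * f₂ v₁ = 1) :
    transvectionPair f₁ f₂ (f₂ v₁ • v₂ - (1 + f₂ v₂) • v₁)
        (f₁ v₂ • v₁ - (1 + f₁ v₁) • v₂) ∘ₗ
      transvectionPair f₁ f₂ v₁ v₂ = id := by
  ext x
  simp only [comp_apply, transvectionPair_apply, id_apply, map_add, map_smul]
  match_scalars
  · ring
  · linear_combination (-(f₂ x)) * h
  · linear_combination (-(f₁ x)) * h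

end LinearMap

namespace LinearEquiv

variable {S N : Type*} [CommRing S] [AddCommGroup N] [Module S N] {f₁ f₂ : Dual S N} {v₁ v₂ : N}

def transvectionPair (h : (1 + f₁ v₁) * (1 + f₂ v₂) - f₁ v₂ * f₂ v₁ = 1) : N ≃ₗ[S] N :=
  ofLinearMap _ _ (LinearMap.transvectionPair_comp_adjugate h)
    (LinearMap.adjugate_comp_transvectionPair h)

theorem coe_transvectionPair (h : (1 + f₁ v₁) * (1 + f₂ v₂) - f₁ v₂ * f₂ v₁ = 1) :
    (transvectionPair h : N →ₗ[S] N) = LinearMap.transvectionPair f₁ f₂ v₁ v₂ :=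
  rfl

end LinearEquiv

section UnimodularPerturbation

variable {S N : Type*} [CommRing S] [AddCommGroup N] [Module S N]

theorem isCoprime_one_add_of_dvd_pow {s θ : S} {m : ℕ} (hθ : s ∣ θ ^ m) (ξ : S) :
    IsCoprime (1 + θ * ξ) (s * (θ * ξ)) := by
  have h : IsCoprime (1 + θ * ξ) (θ * ξ) := ⟨1, -1, by ring⟩
  obtain ⟨r, hr⟩ := hθ
  refine (h.pow_right (n := m + 1)).of_isCoprime_of_dvd_right ⟨r * ξ ^ m, ?_⟩
  rw [pow_succ, mul_pow, hr]
  ring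

theorem exists_linearEquiv_comp_eq_add_smul (b π₃ π₄ : Dual S N) {e x : N}
    (he₃ : π₃ e = 1) (he₄ : π₄ e = 0) (hx : b x = 1) {θ : S} {m : ℕ} (hθ : b e ∣ θ ^ m) :
    ∃ φ : N ≃ₗ[S] N, b ∘ₗ φ = b + θ • π₄ := by
  set s := b e
  set ξ := π₄ x
  obtain ⟨A, B, hAB⟩ := isCoprime_one_add_of_dvd_pow hθ ξ
  set κ := e - s • x
  -- `ξ • π₃ - π₃ x • π₄` vanishes at `x` and takes the value `ξ` at `κ`.
  set ρ := (-(θ * A)) • (ξ • π₃ - π₃ x • π₄) + (-(θ * ξ * B)) • b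
  have hκ : b κ = 0 := by simp [κ, hx, s]
  have hdet : (1 + π₄ (θ • x)) * (1 + ρ κ) - π₄ κ * ρ (θ • x) = 1 := by
    simp only [ρ, κ, map_smul, map_sub, LinearMap.add_apply, LinearMap.smul_apply,
      LinearMap.sub_apply, he₃, he₄, hx, smul_eq_mul]
    linear_combination (-(θ * ξ)) * hAB
  refine ⟨LinearEquiv.transvectionPair hdet, ?_⟩
  rw [LinearEquiv.coe_transvectionPair, LinearMap.comp_transvectionPair, hκ, zero_smul,
    add_zero, map_smul, hx, smul_eq_mul, mul_one]

end UnimodularPerturbation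

section Coordinates

variable {R M : Type*} [CommRing R] [AddCommGroup M] [Module R M] {m : ℕ}

@[simp]
theorem projF_inclF (i j : Fin m) (r : R) :
    projF R M m i (inclF R M m j r) = Pi.single (M := fun _ => R) j r i := by
  simp [projF, inclF]

theorem replace_apply (a : Pn R M m →ₗ[R] R) (i : Fin m) (c : R) (y : Pn R M m) :
    replace R M m a i c y = a y + (c - coord R M m a i) * projF R M m i y := by
  simp [replace]

theorem replace_apply_inclF_self (a : Pn R M m →ₗ[R] R) (i : Fin m) (c : R) :
    replace R M m a i c (inclF R M m i 1) = c := by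
  simp [replace_apply, coord]

theorem surjective_replace_coord_pow {a : Pn R M m →ₗ[R] R} (ha : Surjective a) (i : Fin m)
    (k : ℕ) : Surjective (replace R M m a i (coord R M m a i ^ k)) := by
  obtain ⟨x, hx⟩ := ha 1
  set b := replace R M m a i (coord R M m a i ^ k)
  set e := inclF R M m i 1
  set y := x - projF R M m i x • e
  have hby : b y = 1 - projF R M m i x * coord R M m a i := by
    simp [b, y, e, replace_apply, hx, coord]
  obtain ⟨u, v, huv⟩ := (show IsCoprime (b y) (coord R M m a i) from
    ⟨1, projF R M m i x, by rw [hby]; ring⟩).pow_right (n := k)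
  intro r
  refine ⟨r • (u • y + v • e), ?_⟩
  rw [map_smul, map_add, map_smul, map_smul, replace_apply_inclF_self, smul_eq_mul, smul_eq_mul,
    smul_eq_mul, huv, mul_one]

end Coordinates

section PolynomialBaseChange

variable {R M : Type*} [CommRing R] [AddCommGroup M] [Module R M] {m : ℕ}

open Polynomial

@[simp]
theorem bcMap_tmul (g : Pn R M m →ₗ[R] R) (p : R[X]) (y : Pn R M m) :
    bcMap R M m g (p ⊗ₜ[R] y) = p * C (g y) := by
  simp [bcMap, smul_eq_C_mul, mul_comm]

theorem bcMap_smul (c : R) (g : Pn R M m →ₗ[R] R) :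
    bcMap R M m (c • g) = C c • bcMap R M m g := by
  refine AlgebraTensorModule.ext fun p y => ?_
  simp only [bcMap_tmul, LinearMap.smul_apply, smul_eq_mul, map_mul]
  ring

theorem bcMap_surjective {g : Pn R M m →ₗ[R] R} (hg : Surjective g) :
    Surjective (bcMap R M m g) := by
  intro p
  obtain ⟨x, hx⟩ := hg 1
  exact ⟨p ⊗ₜ x, by simp [hx]⟩

theorem fT_eq (h0 : 0 < m) (h1 : 1 < m) (a : Pn R M m →ₗ[R] R) (k : ℕ) :
    fT R M m h0 h1 a k =
      bcMap R M m (replace R M m a ⟨0, h0⟩ (coord R M m a ⟨0, h0⟩ ^ k)) +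
        (X * C (coord R M m a ⟨0, h0⟩)) • bcMap R M m (projF R M m ⟨1, h1⟩) := by
  rw [fT, bcMap_smul, smul_smul]

end PolynomialBaseChange

/-- Let `R` be a commutative ring, `P₀` a finitely generated projective
`R`-module of rank `2`, `n ≥ 4` and `P_n = P₀ ⊕ Re₃ ⊕ ⋯ ⊕ Re_n`. Let
`a = (a₀, a₃, a₄, …, a_n) : P_n → R` be surjective and `k ∈ ℕ`. Then the `R[T]`-linear map
`f(T) = (a₀ ⊗ 1, a₃^k, a₄ + T·a₃, a₅, …, a_n) : P_n ⊗[R] R[T] → R[T]` is surjective and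
there is an `R[T]`-linear automorphism `φ` of `P_n ⊗[R] R[T]` with `f(T) = f(0) ∘ φ`,
where `f(0)` is the base change of `(a₀, a₃^k, a₄, …, a_n)`. -/
theorem statement10 (R : Type*) [CommRing R] (P₀ : Type*) [AddCommGroup P₀] [Module R P₀]
    (n : ℕ) (hn : 4 ≤ n) (a : Pn R P₀ (n - 2) →ₗ[R] R) (ha : Function.Surjective a)
    (k : ℕ) :
    Function.Surjective (fT R P₀ (n - 2) (by omega) (by omega) a k) ∧
      ∃ φ : Polynomial R ⊗[R] Pn R P₀ (n - 2) ≃ₗ[Polynomial R]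
          Polynomial R ⊗[R] Pn R P₀ (n - 2),
        fT R P₀ (n - 2) (by omega) (by omega) a k =
          (bcMap R P₀ (n - 2)
              (replace R P₀ (n - 2) a ⟨0, by omega⟩ ((coord R P₀ (n - 2) a ⟨0, by omega⟩) ^ k)))
            ∘ₗ (φ : Polynomial R ⊗[R] Pn R P₀ (n - 2) →ₗ[Polynomial R]
              Polynomial R ⊗[R] Pn R P₀ (n - 2)) := by
  set i₀ : Fin (n - 2) := ⟨0, by omega⟩
  set i₁ : Fin (n - 2) := ⟨1, by omega⟩
  obtain ⟨x, hx⟩ := surjective_replace_coord_pow ha i₀ k 1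
  set α := coord R P₀ (n - 2) a i₀
  set b := replace R P₀ (n - 2) a i₀ (α ^ k)
  set e := (1 : Polynomial R) ⊗ₜ[R] inclF R P₀ (n - 2) i₀ 1
  have hθ : bcMap R P₀ (n - 2) b e ∣ (Polynomial.X * Polynomial.C α) ^ k := by
    rw [bcMap_tmul, replace_apply_inclF_self, one_mul, map_pow, mul_pow]
    exact dvd_mul_left _ _
  obtain ⟨φ, hφ⟩ := exists_linearEquiv_comp_eq_add_smul (bcMap R P₀ (n - 2) b)
    (bcMap R P₀ (n - 2) (projF R P₀ (n - 2) i₀)) (bcMap R P₀ (n - 2) (projF R P₀ (n - 2) i₁))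
    (e := e) (x := 1 ⊗ₜ x) (by simp [e]) (by simp [e, i₀, i₁]) (by simp [hx]) hθ
  have hf : fT R P₀ (n - 2) (by omega) (by omega) a k = bcMap R P₀ (n - 2) b ∘ₗ φ := by
    rw [hφ, fT_eq]
  refine ⟨?_, φ, hf⟩
  rw [hf, LinearMap.coe_comp, LinearEquiv.coe_coe]
  exact (bcMap_surjective (surjective_replace_coord_pow ha i₀ k)).comp φ.surjective
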